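/- arXiv:1910.07739 — 3 statements merged into one kernel-verified Lean document; each statement's English description precedes it below -/
import Mathlib

section
/- Let p be a prime, G a finite abelian group, and H ≤ G a subgroup such that G/H is cyclic of order n. The absolute Galois group Gal(Q̄_p/ℚ_p) acts by post-composition on the set of group homomorphisms χ : G → Q̄_pˣ with kernel exactly H, and the number of orbits of this action equals the number of monic irreducible factors of the n-th cyclotomic polynomial Φ_n in ℚ_p[X]. -/
open Polynomial

/-- Let `p` be prime, `G` a finite abelian group, and `H ≤ G` a subgroup with `G ⧸ H` cyclic of
order `n`. The absolute Galois group of `ℚ_p` acts by post-composition on the homomorphisms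
`χ : G → Q̄_pˣ` with kernel exactly `H`, and the number of orbits equals the number of monic
irreducible factors of the `n`-th cyclotomic polynomial over `ℚ_p`. -/
theorem card_orbits_characters_eq_card_irreducible_factors_cyclotomic
    (p : ℕ) [Fact p.Prime] (G : Type*) [CommGroup G] [Fintype G]
    (H : Subgroup G) (n : ℕ) (hcyc : IsCyclic (G ⧸ H)) (hn : Nat.card (G ⧸ H) = n) :
    Nat.card (Quot (fun (χ₁ χ₂ : {χ : G →* (AlgebraicClosure ℚ_[p])ˣ // χ.ker = H}) =>
        ∃ σ : AlgebraicClosure ℚ_[p] ≃ₐ[ℚ_[p]] AlgebraicClosure ℚ_[p],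
          ∀ g : G, σ (χ₁.1 g : AlgebraicClosure ℚ_[p]) = (χ₂.1 g : AlgebraicClosure ℚ_[p])))
      = Nat.card {F : Polynomial ℚ_[p] //
          F.Monic ∧ Irreducible F ∧ F ∣ cyclotomic n ℚ_[p]} := by
  classical
  set K := AlgebraicClosure ℚ_[p] with hKdef
  haveI : CharZero K := charZero_of_injective_algebraMap (algebraMap ℚ_[p] K).injective
  obtain ⟨gbar, hgbar⟩ := hcyc.exists_generator
  obtain ⟨g₀, hg₀⟩ := QuotientGroup.mk'_surjective H gbar
  have hnpos : 0 < n := hn ▸ Nat.card_pos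
  haveI : NeZero (n : K) := ⟨Nat.cast_ne_zero.mpr hnpos.ne'⟩
  have horder : orderOf gbar = n := by
    have htop : Subgroup.zpowers gbar = ⊤ := (Subgroup.eq_top_iff' _).mpr hgbar
    rw [← Nat.card_zpowers, htop, Subgroup.card_top, hn]
  -- every value of a character with kernel `H` is a power of its value at `g₀`
  have h_pow : ∀ g : G, ∃ m : ℤ, ∀ χ : G →* Kˣ, χ.ker = H → χ g = χ g₀ ^ m := by
    intro g
    obtain ⟨m, hm⟩ := hgbar ((QuotientGroup.mk' H) g)
    refine ⟨m, fun χ hχ => ?_⟩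
    have heq : QuotientGroup.mk' H (g₀ ^ m) = QuotientGroup.mk' H g := by
      rw [map_zpow, hg₀]; exact hm
    obtain ⟨h, hh, rfl⟩ := (QuotientGroup.mk'_eq_mk' (N := H)).mp heq
    have hker : χ h = 1 := by
      have : h ∈ χ.ker := by rw [hχ]; exact hh
      exact this
    rw [map_mul, map_zpow, hker, mul_one]
  -- the value at `g₀` has order exactly `n`
  have h_ord : ∀ χ : G →* Kˣ, χ.ker = H → orderOf (χ g₀) = n := by
    intro χ hχ
    have h1 : (χ g₀) ^ n = 1 := by
      have hmem : g₀ ^ n ∈ H := by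
        rw [← QuotientGroup.ker_mk' H]
        exact MonoidHom.mem_ker.mpr (by rw [map_pow, hg₀, ← horder, pow_orderOf_eq_one])
      have : χ (g₀ ^ n) = 1 := by
        have : g₀ ^ n ∈ χ.ker := by rw [hχ]; exact hmem
        exact this
      rwa [map_pow] at this
    have hd1 : orderOf (χ g₀) ∣ n := orderOf_dvd_of_pow_eq_one h1
    have hd2 : n ∣ orderOf (χ g₀) := by
      have hch : χ (g₀ ^ orderOf (χ g₀)) = 1 := by rw [map_pow, pow_orderOf_eq_one]
      have hmem : g₀ ^ orderOf (χ g₀) ∈ H := by rw [← hχ]; exact hch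
      have hbar : gbar ^ orderOf (χ g₀) = 1 := by
        rw [← hg₀, ← map_pow]
        have : g₀ ^ orderOf (χ g₀) ∈ (QuotientGroup.mk' H).ker := by
          rw [QuotientGroup.ker_mk']; exact hmem
        exact this
      exact horder ▸ orderOf_dvd_of_pow_eq_one hbar
    exact Nat.dvd_antisymm hd1 hd2
  -- construction of a character with kernel `H` and prescribed value at `g₀`
  have exists_char : ∀ ζ : Kˣ, orderOf ζ = n → ∃ χ : G →* Kˣ, χ.ker = H ∧ χ g₀ = ζ := by
    intro ζ hζ
    set π : Multiplicative ℤ →* G ⧸ H := zpowersHom (G ⧸ H) gbar with hπdef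
    have hπ : Function.Surjective π := by
      intro x
      obtain ⟨m, hm⟩ := hgbar x
      exact ⟨Multiplicative.ofAdd m, hm⟩
    set θ : Multiplicative ℤ →* Kˣ := zpowersHom Kˣ ζ with hθdef
    have hker : π.ker ≤ θ.ker := by
      intro m hm
      have h1 : gbar ^ (Multiplicative.toAdd m) = 1 := hm
      have hdvd : ((orderOf ζ : ℕ) : ℤ) ∣ Multiplicative.toAdd m := by
        rw [hζ, ← horder]
        exact orderOf_dvd_iff_zpow_eq_one.mpr h1
      exact (orderOf_dvd_iff_zpow_eq_one.mp hdvd : ζ ^ (Multiplicative.toAdd m) = 1)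
    set e := QuotientGroup.quotientKerEquivOfSurjective π hπ with hedef
    set ψ : G ⧸ H →* Kˣ :=
      (QuotientGroup.lift π.ker θ (fun m hm => MonoidHom.mem_ker.mp (hker hm))).comp e.symm.toMonoidHom with hψdef
    have hψπ : ∀ m : Multiplicative ℤ, ψ (π m) = θ m := by
      intro m
      have h1 : e ((QuotientGroup.mk m : Multiplicative ℤ ⧸ π.ker)) = π m := rfl
      have h2 : e.symm (π m) = (QuotientGroup.mk m : Multiplicative ℤ ⧸ π.ker) := by
        rw [← h1, MulEquiv.symm_apply_apply]
      show (QuotientGroup.lift π.ker θ (fun x hx => MonoidHom.mem_ker.mp (hker hx)))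
          (e.symm (π m)) = θ m
      rw [h2]
      rfl
    have hψinj : ψ.ker = ⊥ := by
      rw [Subgroup.eq_bot_iff_forall]
      intro x hx
      obtain ⟨m, rfl⟩ := hπ x
      have hθm : θ m = 1 := by rw [← hψπ]; exact hx
      have h1 : ζ ^ (Multiplicative.toAdd m) = 1 := hθm
      have hdvd : ((orderOf gbar : ℕ) : ℤ) ∣ Multiplicative.toAdd m := by
        rw [horder, ← hζ]
        exact orderOf_dvd_iff_zpow_eq_one.mpr h1
      exact (orderOf_dvd_iff_zpow_eq_one.mp hdvd : gbar ^ (Multiplicative.toAdd m) = 1)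
    refine ⟨ψ.comp (QuotientGroup.mk' H), ?_, ?_⟩
    · rw [← MonoidHom.comap_ker, hψinj, MonoidHom.comap_bot, QuotientGroup.ker_mk']
    · have hg : (QuotientGroup.mk' H) g₀ = π (Multiplicative.ofAdd 1) := by
        rw [hg₀]
        show gbar = gbar ^ (1 : ℤ)
        rw [zpow_one]
      show ψ ((QuotientGroup.mk' H) g₀) = ζ
      rw [hg, hψπ]
      show ζ ^ (1 : ℤ) = ζ
      rw [zpow_one]
  -- Galois transitivity on elements with the same minimal polynomial
  have htrans : ∀ x y : K, minpoly ℚ_[p] x = minpoly ℚ_[p] y → ∃ σ : K ≃ₐ[ℚ_[p]] K, σ y = x := by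
    intro x y hxy
    obtain ⟨σ, hσ⟩ := (Normal.minpoly_eq_iff_mem_orbit (E := K) (F := ℚ_[p])).mp hxy
    exact ⟨σ, hσ⟩
  -- the minimal polynomial of the value at g₀ is a monic irreducible factor of Φₙ
  have hmin : ∀ χ : {χ : G →* Kˣ // χ.ker = H},
      (minpoly ℚ_[p] ((χ.1 g₀ : Kˣ) : K)).Monic ∧
      Irreducible (minpoly ℚ_[p] ((χ.1 g₀ : Kˣ) : K)) ∧
      minpoly ℚ_[p] ((χ.1 g₀ : Kˣ) : K) ∣ cyclotomic n ℚ_[p] := by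
    intro χ
    have hint : IsIntegral ℚ_[p] ((χ.1 g₀ : Kˣ) : K) :=
      (Algebra.IsAlgebraic.isAlgebraic _).isIntegral
    have hprim : IsPrimitiveRoot ((χ.1 g₀ : Kˣ) : K) n := by
      rw [IsPrimitiveRoot.coe_units_iff, ← h_ord χ.1 χ.2]
      exact IsPrimitiveRoot.orderOf _
    refine ⟨minpoly.monic hint, minpoly.irreducible hint, minpoly.dvd _ _ ?_⟩
    rw [aeval_def, ← eval_map, map_cyclotomic]
    exact hprim.isRoot_cyclotomic hnpos
  have wd : ∀ χ₁ χ₂ : {χ : G →* Kˣ // χ.ker = H},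
      (∃ σ : K ≃ₐ[ℚ_[p]] K, ∀ g : G, σ (χ₁.1 g : K) = (χ₂.1 g : K)) →
      minpoly ℚ_[p] ((χ₁.1 g₀ : Kˣ) : K) = minpoly ℚ_[p] ((χ₂.1 g₀ : Kˣ) : K) := by
    rintro χ₁ χ₂ ⟨σ, hσ⟩
    rw [← hσ g₀, minpoly.algEquiv_eq]
  let f : Quot (fun (χ₁ χ₂ : {χ : G →* Kˣ // χ.ker = H}) =>
        ∃ σ : K ≃ₐ[ℚ_[p]] K, ∀ g : G, σ (χ₁.1 g : K) = (χ₂.1 g : K)) →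
      {F : Polynomial ℚ_[p] // F.Monic ∧ Irreducible F ∧ F ∣ cyclotomic n ℚ_[p]} :=
    Quot.lift (fun χ => ⟨minpoly ℚ_[p] ((χ.1 g₀ : Kˣ) : K), hmin χ⟩)
      (fun a b h => Subtype.ext (wd a b h))
  have htest : ∀ χ, f (Quot.mk _ χ) = ⟨minpoly ℚ_[p] ((χ.1 g₀ : Kˣ) : K), hmin χ⟩ := fun χ => rfl
  have finj : Function.Injective f := by
    intro a b
    induction a using Quot.ind with | _ χ₁ =>
    induction b using Quot.ind with | _ χ₂ =>
    intro hab
    rw [htest χ₁, htest χ₂] at hab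
    have hmineq : minpoly ℚ_[p] ((χ₁.1 g₀ : Kˣ) : K) = minpoly ℚ_[p] ((χ₂.1 g₀ : Kˣ) : K) :=
      congrArg Subtype.val hab
    obtain ⟨σ, hσ⟩ := htrans _ _ hmineq.symm
    refine Quot.sound ⟨σ, fun g => ?_⟩
    obtain ⟨m, hm⟩ := h_pow g
    rw [hm χ₁.1 χ₁.2, hm χ₂.1 χ₂.2, Units.val_zpow_eq_zpow_val, Units.val_zpow_eq_zpow_val,
      map_zpow₀, hσ]
  have fsurj : Function.Surjective f := by
    rintro ⟨F, hFm, hFi, hFd⟩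
    have hdeg : F.degree ≠ 0 := (Polynomial.degree_pos_of_irreducible hFi).ne'
    obtain ⟨z, hz⟩ := IsAlgClosed.exists_aeval_eq_zero K F hdeg
    have hzprim : IsPrimitiveRoot z n := by
      have hroot : IsRoot (cyclotomic n K) z := by
        have h0 : (aeval z) (cyclotomic n ℚ_[p]) = 0 := by
          obtain ⟨Q, hQ⟩ := hFd
          rw [hQ, map_mul, hz, zero_mul]
        rwa [aeval_def, ← eval_map, map_cyclotomic] at h0
      exact isRoot_cyclotomic_iff.mp hroot
    obtain ⟨u, hu⟩ := hzprim.isUnit hnpos.ne'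
    have huord : orderOf u = n := by
      have : IsPrimitiveRoot u n := IsPrimitiveRoot.coe_units_iff.mp (hu ▸ hzprim)
      exact this.eq_orderOf.symm
    obtain ⟨χ, hχker, hχg₀⟩ := exists_char u huord
    refine ⟨Quot.mk _ ⟨χ, hχker⟩, ?_⟩
    rw [htest ⟨χ, hχker⟩]
    refine Subtype.ext ?_
    show minpoly ℚ_[p] ((χ g₀ : Kˣ) : K) = F
    rw [hχg₀, hu]
    exact (minpoly.eq_of_irreducible_of_monic hFi hz hFm).symm
  exact Nat.card_eq_of_bijective f ⟨finj, fsurj⟩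
end

section
/- Let G be a group, A an abelian subgroup of G of index 2, and t ∈ G an element with t ∉ A. Then the commutator subgroup of G equals the subgroup generated by the set { t·a·t⁻¹·a⁻¹ : a ∈ A }. -/
open scoped commutatorElement

/-- Let `G` be a group, `A` an abelian subgroup of index `2`, and `t ∉ A`. Then the commutator
subgroup of `G` equals the subgroup generated by `{ t a t⁻¹ a⁻¹ : a ∈ A }`. -/
theorem commutator_eq_closure_conj_comm_of_index_two
    (G : Type*) [Group G] (A : Subgroup G) (hA : A.index = 2)
    (hcomm : ∀ x y : G, x ∈ A → y ∈ A → x * y = y * x)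
    (t : G) (ht : t ∉ A) :
    commutator G = Subgroup.closure {x : G | ∃ a ∈ A, x = t * a * t⁻¹ * a⁻¹} := by
  set S : Set G := {x : G | ∃ a ∈ A, x = t * a * t⁻¹ * a⁻¹} with hS
  set K := Subgroup.closure S with hK
  have hmemS : ∀ a ∈ A, t * a * t⁻¹ * a⁻¹ ∈ K := fun a ha =>
    Subgroup.subset_closure ⟨a, ha, rfl⟩
  -- conjugate of an element of A by t is in A
  have hconj : ∀ a ∈ A, t * a * t⁻¹ ∈ A := by
    intro a ha
    have h1 : t * a ∉ A := by
      rw [Subgroup.mul_mem_iff_of_index_two hA]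
      simp [ht, ha]
    rw [Subgroup.mul_mem_iff_of_index_two hA]
    simp [h1, inv_mem_iff (x := t), ht]
  -- decomposition of any element
  have hdec : ∀ g : G, g ∈ A ∨ ∃ a ∈ A, g = t * a := by
    intro g
    by_cases hg : g ∈ A
    · exact Or.inl hg
    · refine Or.inr ⟨t⁻¹ * g, ?_, by group⟩
      rw [Subgroup.mul_mem_iff_of_index_two hA]
      simp [hg, inv_mem_iff (x := t), ht]
  -- key commutator computations
  have case3 : ∀ a ∈ A, ∀ h ∈ A, ⁅t * a, h⁆ ∈ K := by
    intro a ha h hh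
    have : ⁅t * a, h⁆ = t * h * t⁻¹ * h⁻¹ := by
      rw [commutatorElement_def]
      have h1 : t * a * h = t * h * a := by rw [mul_assoc, hcomm a h ha hh, ← mul_assoc]
      rw [h1]; group
    rw [this]; exact hmemS h hh
  apply le_antisymm
  · rw [commutator_def]
    rw [Subgroup.commutator_le]
    intro g _ h _
    rcases hdec g with hg | ⟨a, ha, rfl⟩
    · rcases hdec h with hh | ⟨b, hb, rfl⟩
      · have : ⁅g, h⁆ = 1 := by
          rw [commutatorElement_eq_one_iff_mul_comm]
          exact hcomm g h hg hh
        rw [this]; exact one_mem K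
      · have : ⁅g, t * b⁆ = ⁅t * b, g⁆⁻¹ := by rw [commutatorElement_inv]
        rw [this]
        exact inv_mem (case3 b hb g hg)
    · rcases hdec h with hh | ⟨b, hb, rfl⟩
      · exact case3 a ha h hh
      · -- both outside A
        have ha' := hconj a ha
        have hb' := hconj b hb
        have c1 : Commute a (t * b * t⁻¹) := hcomm a _ ha hb'
        have c2 : Commute b a := hcomm b a hb ha
        have c3 : Commute b (t * a * t⁻¹) := hcomm b _ hb ha'
        have key : ⁅t * a, t * b⁆ =
            t * (a * (t * b * t⁻¹) * (t * a * t⁻¹)⁻¹ * b⁻¹) * t⁻¹ := by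
          rw [commutatorElement_def]; group
        have inner : a * (t * b * t⁻¹) * (t * a * t⁻¹)⁻¹ * b⁻¹ =
            (t * b * t⁻¹) * b⁻¹ * (a * (t * a * t⁻¹)⁻¹) := by
          have e1 : a * (t * b * t⁻¹) = (t * b * t⁻¹) * a := c1
          have e2 : Commute b⁻¹ (a * (t * a * t⁻¹)⁻¹) :=
            (c2.inv_left).mul_right (c3.inv_left.inv_right)
          rw [e1, mul_assoc ((t * b * t⁻¹) * a), mul_assoc (t * b * t⁻¹),
            show (t * a * t⁻¹)⁻¹ * b⁻¹ = b⁻¹ * (t * a * t⁻¹)⁻¹ from (c3.inv_left.inv_right).symm]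
          have e3 : a * (b⁻¹ * (t * a * t⁻¹)⁻¹) = b⁻¹ * (a * (t * a * t⁻¹)⁻¹) := by
            rw [← mul_assoc, ← c2.inv_left.eq, mul_assoc]
          rw [e3, ← mul_assoc, ← mul_assoc]
        rw [key, inner]
        have final : t * ((t * b * t⁻¹) * b⁻¹ * (a * (t * a * t⁻¹)⁻¹)) * t⁻¹ =
            (t * (t * b * t⁻¹) * t⁻¹ * (t * b * t⁻¹)⁻¹) *
            (t * (t * a * t⁻¹) * t⁻¹ * (t * a * t⁻¹)⁻¹)⁻¹ := by group
        rw [final]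
        exact mul_mem (hmemS _ hb') (inv_mem (hmemS _ ha'))
  · rw [Subgroup.closure_le]
    rintro x ⟨a, ha, rfl⟩
    show t * a * t⁻¹ * a⁻¹ ∈ commutator G
    have : t * a * t⁻¹ * a⁻¹ = ⁅t, a⁆ := by rw [commutatorElement_def]
    rw [this]
    exact Subgroup.commutator_mem_commutator (Subgroup.mem_top t) (Subgroup.mem_top a)
end

section
/- Let p be a prime and let f, g ∈ ℤ_p[X] be polynomials such that every coefficient of f − g is divisible by p^M, for some positive integer M. Let r ∈ ℤ_p be such that g(r) ≡ 0 (mod p^M), and let m be the p-adic valuation of g'(r), where g' is the derivative of g. Assume m is finite and 2m < M. Then there exists a unique t ∈ ℤ_p such that f(t) = 0 and t ≡ r (mod p^{M−m}). -/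
open Polynomial

private lemma dvd_iff_norm_le' {p : ℕ} [Fact p.Prime] (x : ℤ_[p]) (n : ℕ) :
    (p : ℤ_[p]) ^ n ∣ x ↔ ‖x‖ ≤ (p : ℝ) ^ (-(n : ℤ)) := by
  rw [PadicInt.norm_le_pow_iff_mem_span_pow, Ideal.mem_span_singleton]

private lemma dvd_eval_of_dvd_coeff {p : ℕ} [Fact p.Prime] {d : ℤ_[p]}
    {q : Polynomial ℤ_[p]} (h : ∀ i, d ∣ q.coeff i) (x : ℤ_[p]) : d ∣ q.eval x := by
  rw [Polynomial.eval_eq_sum, Polynomial.sum_def]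
  exact Finset.dvd_sum fun i _ => (h i).mul_right _

/-- Hensel lifting: let `f, g ∈ ℤ_p[X]` agree modulo `p^M` coefficientwise, let `r ∈ ℤ_p` with
`g(r) ≡ 0 (mod p^M)` and let `m = v_p(g'(r))` be finite with `2m < M`. Then there is a unique
`t ∈ ℤ_p` with `f(t) = 0` and `t ≡ r (mod p^{M-m})`. -/
theorem hensel_lift_of_approx
    (p : ℕ) [Fact p.Prime] (f g : Polynomial ℤ_[p]) (M : ℕ) (hM : 0 < M)
    (hfg : ∀ i : ℕ, (p : ℤ_[p]) ^ M ∣ (f - g).coeff i)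
    (r : ℤ_[p]) (hr : (p : ℤ_[p]) ^ M ∣ g.eval r)
    (hg' : (g.derivative.eval r) ≠ 0)
    (m : ℕ) (hm : (g.derivative.eval r).valuation = (m : ℤ))
    (hmM : 2 * m < M) :
    ∃! t : ℤ_[p], f.eval t = 0 ∧ (p : ℤ_[p]) ^ (M - m) ∣ (t - r) := by
  have hp1 : (1 : ℝ) < p := by exact_mod_cast (Fact.out : p.Prime).one_lt
  have hp0 : (0 : ℝ) < p := lt_trans one_pos hp1
  -- norm of g'(r)
  have hgn : ‖g.derivative.eval r‖ = (p : ℝ) ^ (-(m : ℤ)) := by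
    rw [PadicInt.norm_eq_zpow_neg_valuation hg', hm]
  -- f(r) divisible by p^M
  have hfr : (p : ℤ_[p]) ^ M ∣ f.eval r := by
    have h1 : (p : ℤ_[p]) ^ M ∣ (f - g).eval r := dvd_eval_of_dvd_coeff hfg r
    rw [Polynomial.eval_sub] at h1
    have := dvd_add h1 hr
    simpa using this
  have hfrn : ‖f.eval r‖ ≤ (p : ℝ) ^ (-(M : ℤ)) := (dvd_iff_norm_le' _ _).mp hfr
  -- f'(r) - g'(r) divisible by p^M
  have hd : (p : ℤ_[p]) ^ M ∣ (f.derivative.eval r - g.derivative.eval r) := by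
    have h1 : ∀ i, (p : ℤ_[p]) ^ M ∣ (f - g).derivative.coeff i := by
      intro i
      rw [Polynomial.coeff_derivative]
      exact (hfg (i + 1)).mul_right _
    have h2 := dvd_eval_of_dvd_coeff h1 r
    rwa [Polynomial.derivative_sub, Polynomial.eval_sub] at h2
  have hdn : ‖f.derivative.eval r - g.derivative.eval r‖ ≤ (p : ℝ) ^ (-(M : ℤ)) :=
    (dvd_iff_norm_le' _ _).mp hd
  have hmMle : (-(M : ℤ)) < -(m : ℤ) := by
    omega
  have hPlt : (p : ℝ) ^ (-(M : ℤ)) < (p : ℝ) ^ (-(m : ℤ)) := zpow_lt_zpow_right₀ hp1 hmMle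
  -- norm of f'(r)
  have hfd : ‖f.derivative.eval r‖ = (p : ℝ) ^ (-(m : ℤ)) := by
    have hne : ‖g.derivative.eval r‖ ≠ ‖f.derivative.eval r - g.derivative.eval r‖ := by
      rw [hgn]
      exact ne_of_gt (lt_of_le_of_lt hdn hPlt)
    have heq : f.derivative.eval r
        = g.derivative.eval r + (f.derivative.eval r - g.derivative.eval r) := by ring
    rw [heq, PadicInt.norm_add_eq_max_of_ne hne, hgn]
    exact max_eq_left (le_of_lt (lt_of_le_of_lt hdn hPlt))
  -- apply Hensel's lemma to f
  have hnorm : ‖f.eval r‖ < ‖f.derivative.eval r‖ ^ 2 := by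
    rw [hfd, ← zpow_natCast ((p : ℝ) ^ (-(m : ℤ))) 2, ← zpow_mul]
    refine lt_of_le_of_lt hfrn (zpow_lt_zpow_right₀ hp1 ?_)
    omega
  obtain ⟨z, hz0, hz1, _, huniq⟩ := hensels_lemma hnorm
  simp only [Polynomial.coe_aeval_eq_eval] at hz0 hz1 huniq
  -- quantitative bound on ‖z - r‖
  have hzr : ‖z - r‖ ≤ (p : ℝ) ^ (-((M - m : ℕ) : ℤ)) := by
    obtain ⟨k, hk⟩ := f.binomExpansion r (z - r)
    rw [show r + (z - r) = z by ring, hz0] at hk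
    have hkey : f.derivative.eval r * (z - r) = -(f.eval r + k * (z - r) ^ 2) := by
      linear_combination -hk
    have hMm : ((M - m : ℕ) : ℤ) = (M : ℤ) - m := by omega
    rw [hMm]
    by_cases hc : z - r = 0
    · rw [hc, norm_zero]
      positivity
    have hcpos : (0 : ℝ) < ‖z - r‖ := norm_pos_iff.mpr hc
    have hle : ‖f.derivative.eval r‖ * ‖z - r‖ ≤ max ‖f.eval r‖ ‖k * (z - r) ^ 2‖ := by
      rw [← norm_mul, hkey, norm_neg]
      exact PadicInt.nonarchimedean _ _
    rcases le_max_iff.mp hle with h | h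
    · rw [hfd] at h
      have h1 : (p : ℝ) ^ (-(m : ℤ)) * ‖z - r‖ ≤ (p : ℝ) ^ (-(M : ℤ)) := le_trans h hfrn
      have h2 : ‖z - r‖ ≤ (p : ℝ) ^ (-(M : ℤ)) / (p : ℝ) ^ (-(m : ℤ)) :=
        (le_div_iff₀' (zpow_pos hp0 _)).mpr h1
      have heq2 : (p : ℝ) ^ (-(M : ℤ)) / (p : ℝ) ^ (-(m : ℤ)) = (p : ℝ) ^ (-((M : ℤ) - m)) := by
        rw [← zpow_sub₀ (ne_of_gt hp0)]
        congr 1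
        ring
      rw [heq2] at h2
      exact h2
    · exfalso
      have h2 : ‖k * (z - r) ^ 2‖ ≤ ‖z - r‖ ^ 2 := by
        rw [norm_mul, norm_pow]
        calc ‖k‖ * ‖z - r‖ ^ 2 ≤ 1 * ‖z - r‖ ^ 2 := by
              gcongr; exact PadicInt.norm_le_one k
          _ = ‖z - r‖ ^ 2 := one_mul _
      have h3 : ‖f.derivative.eval r‖ * ‖z - r‖ ≤ ‖z - r‖ * ‖z - r‖ := by
        calc ‖f.derivative.eval r‖ * ‖z - r‖ ≤ ‖z - r‖ ^ 2 := le_trans h h2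
          _ = ‖z - r‖ * ‖z - r‖ := sq ‖z - r‖
      have h4 : ‖f.derivative.eval r‖ ≤ ‖z - r‖ :=
        le_of_mul_le_mul_right (by rwa [mul_comm ‖z - r‖ ‖z - r‖] at h3) hcpos
      exact absurd hz1 (not_lt_of_ge h4)
  refine ⟨z, ⟨hz0, (dvd_iff_norm_le' _ _).mpr hzr⟩, ?_⟩
  rintro t ⟨ht0, ht1⟩
  have htn : ‖t - r‖ ≤ (p : ℝ) ^ (-((M - m : ℕ) : ℤ)) := (dvd_iff_norm_le' _ _).mp ht1
  refine huniq t ht0 ?_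
  rw [hfd]
  refine lt_of_le_of_lt htn (zpow_lt_zpow_right₀ hp1 ?_)
  omega
end
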